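/- Let w be a (μ+1)-biworld. If for every agent A the intersection A^w ∩ Ā^w is empty, then w is completed. -/

import Mathlib

open Ordinal

/-- Three truth values: true, false, unknown. -/
inductive TV : Type
  | t | f | u
deriving DecidableEq

namespace TV

/-- Inverse of a truth value. -/
def inv : TV → TV
  | t => f
  | f => t
  | u => u

/-- Binary greatest lower bound in the truth order f ≤ₜ u ≤ₜ t. -/
def tmin : TV → TV → TV
  | f, _ => f
  | _, f => f
  | u, _ => u
  | _, u => u
  | t, t => t

/-- Truth value of a proposition. -/
noncomputable def ofProp (p : Prop) : TV := by
  classical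
  exact if p then t else f

/-- Greatest lower bound of a set of truth values in the truth order f ≤ₜ u ≤ₜ t. -/
noncomputable def tglbSet (s : Set TV) : TV := by
  classical
  exact if f ∈ s then f else if u ∈ s then u else t

/-- Least upper bound of a (chain) set of truth values in the precision order
u ≤ₚ t, u ≤ₚ f. -/
noncomputable def plubSet (s : Set TV) : TV := by
  classical
  exact if t ∈ s then t else if f ∈ s then f else u

/-- Precision order on truth values: u below everything. -/
def ple (a b : TV) : Prop := a = u ∨ a = b

end TV

/-- Formulas of the language COEL. -/
inductive Form (Agent Atom : Type) : Type
  | atom : Atom → Form Agent Atom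
  | neg : Form Agent Atom → Form Agent Atom
  | and : Form Agent Atom → Form Agent Atom → Form Agent Atom
  | K : Agent → Form Agent Atom → Form Agent Atom
  | M : Agent → Form Agent Atom → Form Agent Atom
  | E : Set Agent → Form Agent Atom → Form Agent Atom
  | C : Set Agent → Form Agent Atom → Form Agent Atom

/-- Iterated `E_G` operator: `Eiter G 0 φ = φ`, `Eiter G (k+1) φ = E_G (Eiter G k φ)`. -/
def Form.Eiter {Agent Atom : Type} (G : Set Agent) : ℕ → Form Agent Atom → Form Agent Atom
  | 0, φ => φ
  | k + 1, φ => .E G (Form.Eiter G k φ)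

/-- Modal depth of a COEL formula. -/
noncomputable def Form.MD {Agent Atom : Type} : Form Agent Atom → Ordinal.{0}
  | .atom _ => 0
  | .neg φ => φ.MD
  | .and φ ψ => max φ.MD ψ.MD
  | .K _ φ => φ.MD + 1
  | .M _ φ => φ.MD + 1
  | .E _ φ => φ.MD + 1
  | .C _ φ => φ.MD + omega0

/-- A system of prebiworlds over agents `Agent` and propositional vocabulary `Atom`,
packaging the transfinite construction of μ-prebiworlds for all countable ordinals μ,
together with the recursive equations defining restriction. -/
structure PrebSys (Agent Atom : Type) where
  /-- the collection of all prebiworlds (of all depths) -/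
  W : Type 1
  /-- the depth of a prebiworld -/
  depth : W → Ordinal.{0}
  depth_countable : ∀ w, (depth w).card ≤ Cardinal.aleph0
  /-- the objective interpretation of a prebiworld -/
  obj : W → Set Atom
  /-- for a (μ+1)-prebiworld, the set A^w of μ-prebiworlds deemed (extendibly) possible -/
  poss : Agent → W → Set W
  /-- for a (μ+1)-prebiworld, the set Ā^w of μ-prebiworlds deemed (extendibly) impossible -/
  imposs : Agent → W → Set W
  /-- for a limit-depth prebiworld, its component (w)_α at α < depth w -/
  comp : W → Ordinal.{0} → W
  /-- the restriction w|_α of w to depth α ≤ depth w -/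
  restrict : W → Ordinal.{0} → W
  depth_poss : ∀ (A : Agent) (w v : W), v ∈ poss A w → depth w = depth v + 1
  depth_imposs : ∀ (A : Agent) (w v : W), v ∈ imposs A w → depth w = depth v + 1
  depth_comp : ∀ (w : W) (α : Ordinal.{0}), Order.IsSuccLimit (depth w) → α < depth w →
    depth (comp w α) = α
  comp_mono : ∀ (w : W) (α β : Ordinal.{0}), Order.IsSuccLimit (depth w) → α ≤ β → β < depth w →
    restrict (comp w β) α = comp w α
  ext_zero : ∀ w w' : W, depth w = 0 → depth w' = 0 → obj w = obj w' → w = w'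
  ext_succ : ∀ (w w' : W) (μ : Ordinal.{0}), depth w = μ + 1 → depth w' = μ + 1 →
    obj w = obj w' → (∀ A, poss A w = poss A w') → (∀ A, imposs A w = imposs A w') → w = w'
  ext_limit : ∀ w w' : W, Order.IsSuccLimit (depth w) → depth w' = depth w →
    (∀ α < depth w, comp w α = comp w' α) → w = w'
  depth_restrict : ∀ (w : W) (α : Ordinal.{0}), α ≤ depth w → depth (restrict w α) = α
  restrict_zero : ∀ w : W, obj (restrict w 0) = obj w
  restrict_limit : ∀ (w : W) (α β : Ordinal.{0}), Order.IsSuccLimit α → α ≤ depth w → β < α →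
    comp (restrict w α) β = restrict w β
  restrict_succ_limit : ∀ (w : W) (α : Ordinal.{0}), Order.IsSuccLimit (depth w) →
    α + 1 ≤ depth w → restrict w (α + 1) = comp w (α + 1)
  restrict_succ_obj : ∀ (w : W) (μ α : Ordinal.{0}), depth w = μ + 1 → α + 1 ≤ depth w →
    obj (restrict w (α + 1)) = obj w
  restrict_succ_poss : ∀ (w : W) (μ α : Ordinal.{0}) (A : Agent), depth w = μ + 1 →
    α + 1 ≤ depth w →
    poss A (restrict w (α + 1)) = (fun v => restrict v α) '' poss A w
  restrict_succ_imposs : ∀ (w : W) (μ α : Ordinal.{0}) (A : Agent), depth w = μ + 1 →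
    α + 1 ≤ depth w →
    imposs A (restrict w (α + 1)) = (fun v => restrict v α) '' imposs A w

/-- The precision order: v ≤ₚ w iff w restricted to the depth of v equals v. -/
def PrebSys.lep {Agent Atom : Type} (S : PrebSys Agent Atom) (v w : S.W) : Prop :=
  S.depth v ≤ S.depth w ∧ S.restrict w (S.depth v) = v

/-- A system of biworlds: prebiworlds together with the simultaneously
(transfinite-recursively) defined predicates `Biworld` and `Incompleted`
and their defining clauses. -/
structure BiSys (Agent Atom : Type) extends PrebSys Agent Atom where
  Biworld : W → Prop
  Incompleted : W → Prop
  biworld_zero : ∀ w : W, depth w = 0 → Biworld w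
  biworld_succ : ∀ (w : W) (μ : Ordinal.{0}), depth w = μ + 1 →
    (Biworld w ↔ ∀ A : Agent,
      poss A w ∪ imposs A w = {v | depth v = μ ∧ Biworld v} ∧
      ∀ v ∈ poss A w ∩ imposs A w, Incompleted v)
  biworld_limit : ∀ w : W, Order.IsSuccLimit (depth w) →
    (Biworld w ↔ ∀ α < depth w, Biworld (comp w α))
  incompleted_iff : ∀ w : W, Incompleted w ↔
    ∃ v₁ v₂ : W, v₁ ≠ v₂ ∧ Biworld v₁ ∧ Biworld v₂ ∧
      depth v₁ = depth w + 1 ∧ depth v₂ = depth w + 1 ∧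
      PrebSys.lep toPrebSys w v₁ ∧ PrebSys.lep toPrebSys w v₂

/-- A biworld is completed if it is not incompleted. -/
def BiSys.Completed {Agent Atom : Type} (S : BiSys Agent Atom) (w : S.W) : Prop :=
  ¬ S.Incompleted w

/-- For a limit-depth prebiworld w, the set A↑w. -/
def BiSys.upPoss {Agent Atom : Type} (S : BiSys Agent Atom) (A : Agent) (w : S.W) :
    Set S.W :=
  {v | S.depth v = S.depth w ∧ ∀ α < S.depth w, S.comp v α ∈ S.poss A (S.comp w (α + 1))}

/-- For a limit-depth prebiworld w, the set Ā↑w. -/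
def BiSys.upImposs {Agent Atom : Type} (S : BiSys Agent Atom) (A : Agent) (w : S.W) :
    Set S.W :=
  {v | S.depth v = S.depth w ∧ ∀ α < S.depth w, S.comp v α ∈ S.imposs A (S.comp w (α + 1))}

/-- A system of biworlds together with the three-valued valuation of COEL formulas
and its defining equations. -/
structure ValSys (Agent Atom : Type) extends BiSys Agent Atom where
  val : Form Agent Atom → W → TV
  val_atom : ∀ (P : Atom) (w : W), val (.atom P) w = TV.ofProp (P ∈ obj w)
  val_neg : ∀ (φ : Form Agent Atom) (w : W), val (.neg φ) w = (val φ w).inv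
  val_and : ∀ (φ ψ : Form Agent Atom) (w : W),
    val (.and φ ψ) w = (val φ w).tmin (val ψ w)
  val_K_zero : ∀ (A : Agent) (φ : Form Agent Atom) (w : W), depth w = 0 →
    val (.K A φ) w = TV.u
  val_K_succ : ∀ (A : Agent) (φ : Form Agent Atom) (w : W) (μ : Ordinal.{0}),
    depth w = μ + 1 → val (.K A φ) w = TV.tglbSet (val φ '' poss A w)
  val_K_limit : ∀ (A : Agent) (φ : Form Agent Atom) (w : W), Order.IsSuccLimit (depth w) →
    val (.K A φ) w = TV.plubSet {x | ∃ α < depth w, x = val (.K A φ) (comp w α)}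
  val_M_zero : ∀ (A : Agent) (φ : Form Agent Atom) (w : W), depth w = 0 →
    val (.M A φ) w = TV.u
  val_M_succ : ∀ (A : Agent) (φ : Form Agent Atom) (w : W) (μ : Ordinal.{0}),
    depth w = μ + 1 →
    val (.M A φ) w = TV.tglbSet ((fun v => (val φ v).inv) '' imposs A w)
  val_M_limit : ∀ (A : Agent) (φ : Form Agent Atom) (w : W), Order.IsSuccLimit (depth w) →
    val (.M A φ) w = TV.plubSet {x | ∃ α < depth w, x = val (.M A φ) (comp w α)}
  val_E : ∀ (G : Set Agent) (φ : Form Agent Atom) (w : W),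
    val (.E G φ) w = TV.tglbSet {x | ∃ A ∈ G, x = val (.K A φ) w}
  val_C : ∀ (G : Set Agent) (φ : Form Agent Atom) (w : W),
    val (.C G φ) w = TV.tglbSet {x | ∃ k : ℕ, 1 ≤ k ∧ x = val (Form.Eiter G k φ) w}

/-- A world: a completed (ω²+1)-biworld. -/
def ValSys.World {Agent Atom : Type} (S : ValSys Agent Atom) (w : S.W) : Prop :=
  S.Biworld w ∧ S.depth w = omega0 ^ 2 + 1 ∧ S.toBiSys.Completed w

/-- Accessibility in the canonical Kripke structure K*: w R_A w' iff w'|_{ω²} ∈ A^w. -/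
def ValSys.Racc {Agent Atom : Type} (S : ValSys Agent Atom) (A : Agent)
    (w w' : S.W) : Prop :=
  S.restrict w' (omega0 ^ 2) ∈ S.poss A w

/-- Two-valued Kripke valuation on the canonical Kripke structure K* of worlds. -/
def ValSys.kval {Agent Atom : Type} (S : ValSys Agent Atom) :
    Form Agent Atom → S.W → Prop
  | .atom P, w => P ∈ S.obj w
  | .neg φ, w => ¬ S.kval φ w
  | .and φ ψ, w => S.kval φ w ∧ S.kval ψ w
  | .K A φ, w => ∀ w', S.World w' → S.Racc A w w' → S.kval φ w'
  | .M A φ, w => ∀ w', S.World w' → S.kval φ w' → S.Racc A w w'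
  | .E G φ, w => ∀ A ∈ G, ∀ w', S.World w' → S.Racc A w w' → S.kval φ w'
  | .C G φ, w => ∀ w', Relation.TransGen (fun x y => S.World y ∧ ∃ A ∈ G, S.Racc A x y) w w' →
      S.kval φ w'

/-! Two biworld extensions `v₁, v₂` of depth `μ+2` of `w` share their objective part, and for each
agent the sets `A^{v₁} ∪ Ā^{v₁}` and `A^{v₂} ∪ Ā^{v₂}` are both the set of all `(μ+1)`-biworlds.
Restriction to depth `μ` maps `A^{vᵢ}` onto `A^w` and `Ā^{vᵢ}` onto `Ā^w`, so when these are
disjoint, `A^{v₁}` is disjoint from `Ā^{v₂}` and vice versa; hence the two partitions coincide and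
`v₁ = v₂` by extensionality. -/

theorem Set.eq_and_eq_of_union_eq_of_disjoint {α : Type*} {s₁ t₁ s₂ t₂ : Set α}
    (h : s₁ ∪ t₁ = s₂ ∪ t₂) (h₁₂ : Disjoint s₁ t₂) (h₂₁ : Disjoint s₂ t₁) :
    s₁ = s₂ ∧ t₁ = t₂ := by
  have hs₁ : s₁ ⊆ s₂ ∪ t₂ := h ▸ subset_union_left
  have hs₂ : s₂ ⊆ s₁ ∪ t₁ := h ▸ subset_union_left
  have ht₁ : t₁ ⊆ s₂ ∪ t₂ := h ▸ subset_union_right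
  have ht₂ : t₂ ⊆ s₁ ∪ t₁ := h ▸ subset_union_right
  exact ⟨(Disjoint.subset_left_of_subset_union hs₁ h₁₂).antisymm
      (Disjoint.subset_left_of_subset_union hs₂ h₂₁),
    (Disjoint.subset_right_of_subset_union ht₁ h₂₁.symm).antisymm
      (Disjoint.subset_right_of_subset_union ht₂ h₁₂.symm)⟩

namespace BiSys

variable {Agent Atom : Type} (S : BiSys Agent Atom)

theorem poss_union_imposs_eq {x y : S.W} {ν : Ordinal.{0}} (hx : S.depth x = ν + 1)
    (hy : S.depth y = ν + 1) (hbx : S.Biworld x) (hby : S.Biworld y) (A : Agent) :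
    S.poss A x ∪ S.imposs A x = S.poss A y ∪ S.imposs A y := by
  rw [((S.biworld_succ x ν hx).mp hbx A).1, ((S.biworld_succ y ν hy).mp hby A).1]

theorem image_restrict_poss {v : S.W} {μ : Ordinal.{0}} (hv : S.depth v = μ + 1 + 1)
    (A : Agent) : (S.restrict · μ) '' S.poss A v = S.poss A (S.restrict v (μ + 1)) :=
  (S.restrict_succ_poss v (μ + 1) μ A hv (hv ▸ le_self_add)).symm

theorem image_restrict_imposs {v : S.W} {μ : Ordinal.{0}} (hv : S.depth v = μ + 1 + 1)
    (A : Agent) : (S.restrict · μ) '' S.imposs A v = S.imposs A (S.restrict v (μ + 1)) :=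
  (S.restrict_succ_imposs v (μ + 1) μ A hv (hv ▸ le_self_add)).symm

theorem eq_of_restrict_eq_of_disjoint {v₁ v₂ w : S.W} {μ : Ordinal.{0}}
    (hd₁ : S.depth v₁ = μ + 1 + 1) (hd₂ : S.depth v₂ = μ + 1 + 1)
    (hb₁ : S.Biworld v₁) (hb₂ : S.Biworld v₂)
    (hr₁ : S.restrict v₁ (μ + 1) = w) (hr₂ : S.restrict v₂ (μ + 1) = w)
    (hdisj : ∀ A, Disjoint (S.poss A w) (S.imposs A w)) :
    v₁ = v₂ := by
  have hobj : S.obj v₁ = S.obj v₂ := by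
    rw [← S.restrict_succ_obj v₁ _ μ hd₁ (hd₁ ▸ le_self_add),
      ← S.restrict_succ_obj v₂ _ μ hd₂ (hd₂ ▸ le_self_add), hr₁, hr₂]
  have hpart : ∀ A, S.poss A v₁ = S.poss A v₂ ∧ S.imposs A v₁ = S.imposs A v₂ := fun A =>
    Set.eq_and_eq_of_union_eq_of_disjoint (S.poss_union_imposs_eq hd₁ hd₂ hb₁ hb₂ A)
      (Disjoint.of_image (f := (S.restrict · μ)) <| by
        rw [S.image_restrict_poss hd₁, S.image_restrict_imposs hd₂, hr₁, hr₂]; exact hdisj A)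
      (Disjoint.of_image (f := (S.restrict · μ)) <| by
        rw [S.image_restrict_poss hd₂, S.image_restrict_imposs hd₁, hr₁, hr₂]; exact hdisj A)
  exact S.ext_succ v₁ v₂ _ hd₁ hd₂ hobj (fun A => (hpart A).1) (fun A => (hpart A).2)

end BiSys

theorem completed_of_inter_empty_general {Agent Atom : Type} (S : BiSys Agent Atom) (w : S.W)
    (μ : Ordinal.{0}) (hd : S.depth w = μ + 1)
    (h : ∀ A : Agent, S.poss A w ∩ S.imposs A w = ∅) :
    S.Completed w := by
  intro hinc
  obtain ⟨v₁, v₂, hne, hb₁, hb₂, hd₁, hd₂, ⟨-, hr₁⟩, ⟨-, hr₂⟩⟩ := (S.incompleted_iff w).mp hinc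
  rw [hd] at hd₁ hd₂ hr₁ hr₂
  exact hne <| S.eq_of_restrict_eq_of_disjoint hd₁ hd₂ hb₁ hb₂ hr₁ hr₂ fun A =>
    Set.disjoint_iff_inter_eq_empty.mpr (h A)

/-- a (μ+1)-biworld with A^w ∩ Ā^w = ∅ for every agent is completed. -/
theorem completed_of_inter_empty {Agent Atom : Type} (S : BiSys Agent Atom) (w : S.W)
    (μ : Ordinal.{0}) (hd : S.depth w = μ + 1) (hb : S.Biworld w)
    (h : ∀ A : Agent, S.poss A w ∩ S.imposs A w = ∅) :
    S.Completed w :=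
  completed_of_inter_empty_general S w μ hd h
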